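/- arXiv:2103.10053 — 3 statements merged into one kernel-verified Lean document; each statement's English description precedes it below -/
import Mathlib

section
/- Let λ₀ > 0, θ(λ) = 4λ³ - 12λλ₀², and let λ = p + iq lie on the ray λ₀ + h·λ₀·e^{iπ/4}, h > 0 (so p > λ₀ and q = p - λ₀ > 0). Then Re(2iθ(λ)) = -8q(3p² - q² - 3λ₀²) ≤ -16(p - λ₀)·q·(2λ₀ + p) < 0, and hence |e^{2iθ(λ)t}| ≤ e^{-16 t (p-λ₀) q (2λ₀+p)} for t > 0. -/
open Complex

theorem stmt13 (lam0 p q t : ℝ) (hlam0 : 0 < lam0) (hp : lam0 < p)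
    (hq : q = p - lam0) (ht : 0 < t)
    (θ : ℂ → ℂ) (hθ : ∀ lam : ℂ, θ lam = 4 * lam ^ 3 - 12 * lam * (lam0 : ℂ) ^ 2)
    (lam : ℂ) (hlam : lam = Complex.mk p q) :
    (2 * Complex.I * θ lam).re = -8 * q * (3 * p ^ 2 - q ^ 2 - 3 * lam0 ^ 2) ∧
    ‖Complex.exp (2 * Complex.I * θ lam * (t : ℂ))‖ ≤
      Real.exp (-16 * t * (p - lam0) * q * (2 * lam0 + p)) := by
  have hlam' : lam = (p : ℂ) + q * Complex.I := by
    rw [hlam]; exact (Complex.mk_eq_add_mul_I p q)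
  have hre : (2 * Complex.I * θ lam).re = -8 * q * (3 * p ^ 2 - q ^ 2 - 3 * lam0 ^ 2) := by
    rw [hθ, hlam']
    simp [Complex.ext_iff, pow_succ, Complex.mul_re, Complex.mul_im, Complex.add_re,
      Complex.add_im, Complex.ofReal_re, Complex.ofReal_im]
    ring
  refine ⟨hre, ?_⟩
  rw [Complex.norm_exp]
  have : (2 * Complex.I * θ lam * (t : ℂ)).re = (2 * Complex.I * θ lam).re * t := by
    simp [Complex.mul_re]
  rw [this, hre, hq]
  apply le_of_eq
  congr 1
  ring
end

section
/- Let ν > 0 and β₂₁ = r(λ₀)·Γ(-iν)·ν/(√(2π)·e^{iπ/4}·e^{-πν/2}) where ν = -(1/(2π))log(1-|r(λ₀)|²). Then |β₂₁|² = ν. (This uses the identity |Γ(iν)|² = π/(ν·sinh(πν)).) -/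
/-!
Euler's reflection formula together with `Γ(1 - iν) = -iν Γ(-iν)` and `Γ(-iν) = conj Γ(iν)` gives
`|Γ(iν)|² = π / (ν sinh πν)`. Hence `|β|² = |r|² ν / (2 sinh(πν) e^{-πν}) = |r|² ν / (1 - e^{-2πν})`,
and the definition of `ν` says exactly that `1 - e^{-2πν} = |r|²`.
-/

open Complex ComplexConjugate

theorem Complex.norm_Gamma_I_mul_sq {t : ℝ} (ht : t ≠ 0) :
    ‖Gamma (I * t)‖ ^ 2 = Real.pi / (t * Real.sinh (Real.pi * t)) := by
  have hsinh : Real.sinh (Real.pi * t) ≠ 0 := by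
    simpa [Real.sinh_eq_zero] using mul_ne_zero Real.pi_ne_zero ht
  have hshift : Gamma (1 - I * t) = -I * t * conj (Gamma (I * t)) := by
    rw [← Gamma_conj, show 1 - I * t = -I * t + 1 by ring, Gamma_add_one _ (by simp [ht])]
    simp
  have hsin : sin (Real.pi * (I * t)) = Real.sinh (Real.pi * t) * I := by
    rw [show (Real.pi : ℂ) * (I * t) = ((Real.pi * t : ℝ) : ℂ) * I by push_cast; ring,
      sin_mul_I, ofReal_sinh]
  have href := Gamma_mul_Gamma_one_sub (I * t)
  rw [hshift, hsin, eq_div_iff (mul_ne_zero (ofReal_ne_zero.2 hsinh) I_ne_zero)] at href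
  rw [Complex.sq_norm, eq_div_iff (mul_ne_zero ht hsinh), ← ofReal_inj]
  simp only [ofReal_mul, ← mul_conj]
  linear_combination href + Gamma (I * t) * conj (Gamma (I * t)) * t * Real.sinh (Real.pi * t) * I_sq

theorem Real.two_mul_sinh_mul_exp_neg (x : ℝ) :
    2 * Real.sinh x * Real.exp (-x) = 1 - Real.exp (-2 * x) := by
  have h : Real.exp x * Real.exp (-x) = 1 := by rw [← Real.exp_add, add_neg_cancel, Real.exp_zero]
  rw [Real.sinh_eq, show -2 * x = -x + -x by ring, Real.exp_add]
  linear_combination h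

theorem stmt15 (r0 : ℂ) (hr0 : 0 < ‖r0‖) (hr1 : ‖r0‖ < 1)
    (ν : ℝ) (hν : ν = -(1 / (2 * Real.pi)) * Real.log (1 - ‖r0‖ ^ 2))
    (β : ℂ)
    (hβ : β = r0 * Complex.Gamma (-Complex.I * ν) * ν /
      ((Real.sqrt (2 * Real.pi) : ℂ) * Complex.exp (Complex.I * Real.pi / 4) *
        Complex.exp (-(Real.pi : ℂ) * ν / 2))) :
    ‖β‖ ^ 2 = ν := by
  have hlog : Real.log (1 - ‖r0‖ ^ 2) = -2 * (Real.pi * ν) := by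
    rw [hν]; field_simp
  have hν_pos : 0 < ν := by
    have : Real.log (1 - ‖r0‖ ^ 2) < 0 := Real.log_neg (by nlinarith) (by nlinarith)
    nlinarith [Real.pi_pos]
  have hnorm_sq : ‖r0‖ ^ 2 = 1 - Real.exp (-2 * (Real.pi * ν)) := by
    rw [← hlog, Real.exp_log (by nlinarith), sub_sub_cancel]
  have hΓ : ‖Gamma (-I * ν)‖ ^ 2 = Real.pi / (ν * Real.sinh (Real.pi * ν)) := by
    have := norm_Gamma_I_mul_sq (neg_ne_zero.2 hν_pos.ne')
    rwa [ofReal_neg, mul_neg, ← neg_mul, mul_neg, Real.sinh_neg, neg_mul_neg] at this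
  calc ‖β‖ ^ 2
      = ‖r0‖ ^ 2 * ‖Gamma (-I * ν)‖ ^ 2 * ν ^ 2 / (2 * Real.pi * Real.exp (-(Real.pi * ν))) := by
        simp [hβ, norm_exp, div_pow, mul_pow, abs_of_pos hν_pos, Real.pi_pos.le,
          ← Real.exp_nat_mul]
        ring_nf
    _ = ν * ((1 - Real.exp (-2 * (Real.pi * ν))) /
          (2 * Real.sinh (Real.pi * ν) * Real.exp (-(Real.pi * ν)))) := by
        rw [hΓ, hnorm_sq]
        field_simp
    _ = ν := by
        rw [← Real.two_mul_sinh_mul_exp_neg, div_self (by positivity), mul_one]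
end

section
/- Suppose a: closed upper half-plane → ℂ is analytic in the open upper half-plane, continuous up to the boundary, a(λ) → 1 as |λ| → ∞, and a has finitely many zeros λ₁,…,λ_N, all simple and in the open upper half-plane, and |a(λ)| = 1 for real λ. Then a(λ) = ∏_{n=1}^N (λ - λ_n)/(λ - conj(λ_n)) (the trace formula in the reflectionless case). -/
/-!
Divide `a` by the Blaschke product `B z = ∏ (z - λₙ) / (z - conj λₙ)`. Because the zeros of `a` in
the upper half-plane are exactly the simple zeros `λₙ`, the quotient `h = a / B` is holomorphic and
zero-free there and continuous up to the boundary; it tends to `1` at infinity, and `|h| = 1` on `ℝ`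
since `|B| = 1` there. Phragmén–Lindelöf applied to `h` and to `1 / h` gives `|h| = 1` on the closed
half-plane, so `h` is constant by the maximum modulus principle, and the constant is its limit `1`.
-/

open Complex Filter Set Bornology
open scoped Topology ComplexConjugate

theorem exists_eq_mul_prod_sub_of_eq_zero {U K : Set ℂ} (hU : IsOpen U) {f : ℂ → ℂ}
    (hd : DifferentiableOn ℂ f U) (hc : ContinuousOn f K) {s : Finset ℂ}
    (hzero : ∀ c ∈ s, c ∈ U ∧ f c = 0) :
    ∃ g : ℂ → ℂ, DifferentiableOn ℂ g U ∧ ContinuousOn g K ∧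
      ∀ z, f z = g z * ∏ c ∈ s, (z - c) := by
  induction s using Finset.induction_on generalizing f with
  | empty => exact ⟨f, hd, hc, fun z => by simp⟩
  | @insert c s hcs ih =>
    obtain ⟨hcU, hfc⟩ := hzero c (Finset.mem_insert_self c s)
    have hd' : DifferentiableOn ℂ (dslope f c) U := (differentiableOn_dslope (hU.mem_nhds hcU)).2 hd
    have hc' : ContinuousOn (dslope f c) K := by
      intro z hz
      rcases eq_or_ne z c with rfl | hne
      · exact (hd'.differentiableAt (hU.mem_nhds hcU)).continuousAt.continuousWithinAt
      · exact (continuousWithinAt_dslope_of_ne hne).2 (hc z hz)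
    have hzero' : ∀ d ∈ s, d ∈ U ∧ dslope f c d = 0 := by
      intro d hd
      have hdc : d ≠ c := ne_of_mem_of_not_mem hd hcs
      obtain ⟨hdU, hfd⟩ := hzero d (Finset.mem_insert_of_mem hd)
      simp [dslope_of_ne _ hdc, slope_def_field, hfd, hfc, hdU]
    obtain ⟨g, hgd, hgc, hfg⟩ := ih hd' hc' hzero'
    refine ⟨g, hgd, hgc, fun z => ?_⟩
    have hslope : (z - c) * dslope f c z = f z := by
      simpa [hfc] using sub_smul_dslope f c z
    rw [← hslope, hfg z, Finset.prod_insert hcs]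
    ring

theorem deriv_mul_eq_zero_of_eq_zero {𝕜 : Type*} [NontriviallyNormedField 𝕜] {f g : 𝕜 → 𝕜}
    {c : 𝕜} (hf : DifferentiableAt 𝕜 f c) (hg : DifferentiableAt 𝕜 g c) (hf0 : f c = 0)
    (hg0 : g c = 0) : deriv (fun z => f z * g z) c = 0 := by
  simp [deriv_fun_mul hf hg, hf0, hg0]

theorem tendsto_sub_div_sub_cobounded {𝕜 : Type*} [NormedField 𝕜] (a b : 𝕜) :
    Tendsto (fun z => (z - a) / (z - b)) (cobounded 𝕜) (𝓝 1) := by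
  have hcont : Tendsto (fun w : 𝕜 => (1 - a * w) / (1 - b * w)) (𝓝 0) (𝓝 1) := by
    have : ContinuousAt (fun w : 𝕜 => (1 - a * w) / (1 - b * w)) 0 := by fun_prop (disch := simp)
    simpa using this.tendsto
  refine (hcont.comp tendsto_inv₀_cobounded).congr' ?_
  filter_upwards [eventually_ne_cobounded 0] with z hz
  simp only [Function.comp_apply]
  rw [← mul_div_mul_right _ _ (inv_ne_zero hz)]
  field_simp

noncomputable def blaschke (s : Finset ℂ) (z : ℂ) : ℂ :=
  ∏ c ∈ s, (z - c) / (z - conj c)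

theorem tendsto_blaschke_cobounded (s : Finset ℂ) :
    Tendsto (blaschke s) (cobounded ℂ) (𝓝 1) := by
  simpa only [Finset.prod_const_one] using!
    tendsto_finsetProd s fun c _ => tendsto_sub_div_sub_cobounded c (conj c)

theorem norm_blaschke_ofReal {s : Finset ℂ} (hs : ∀ c ∈ s, c.im ≠ 0) (x : ℝ) :
    ‖blaschke s x‖ = 1 := by
  rw [blaschke, norm_prod]
  refine Finset.prod_eq_one fun c hc => ?_
  have hxc : (x : ℂ) - c ≠ 0 := fun h => hs c hc (by simpa using congrArg im h)
  rw [norm_div, show (x : ℂ) - conj c = conj ((x : ℂ) - c) by simp, norm_conj,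
    div_self (norm_ne_zero_iff.2 hxc)]

theorem tendsto_ofReal_mul_I_atTop :
    Tendsto (fun t : ℝ => (t : ℂ) * I) atTop (cobounded ℂ ⊓ 𝓟 {z | 0 < z.im}) := by
  refine tendsto_inf.2 ⟨tendsto_norm_atTop_iff_cobounded.1 ?_, tendsto_principal.2 ?_⟩
  · simpa using tendsto_abs_atTop_atTop
  · filter_upwards [eventually_gt_atTop 0] with t ht
    simpa using ht

theorem tendsto_mul_I_cobounded :
    Tendsto (· * I) (cobounded ℂ ⊓ 𝓟 {z | 0 < z.re}) (cobounded ℂ ⊓ 𝓟 {z | 0 < z.im}) := by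
  refine tendsto_inf.2 ⟨tendsto_norm_atTop_iff_cobounded.1 ?_, tendsto_principal.2 ?_⟩
  · simpa using tendsto_norm_cobounded_atTop.mono_left inf_le_left
  · filter_upwards [mem_inf_of_right (mem_principal_self _)] with z hz
    simpa using hz

theorem PhragmenLindelof.upper_half_plane_of_bounded {E : Type*} [NormedAddCommGroup E]
    [NormedSpace ℂ E] {f : ℂ → E} {C : ℝ} (hd : DiffContOnCl ℂ f {z | 0 < z.im})
    (hb : IsBoundedUnder (· ≤ ·) (cobounded ℂ ⊓ 𝓟 {z | 0 < z.im}) (‖f ·‖))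
    (hre : ∀ x : ℝ, ‖f x‖ ≤ C) {z : ℂ} (hz : 0 ≤ z.im) : ‖f z‖ ≤ C := by
  have hd' : DiffContOnCl ℂ (fun w => f (w * I)) {w | 0 < w.re} :=
    hd.comp (differentiable_id.mul_const I).diffContOnCl fun w hw => by simpa using hw
  have hrot := PhragmenLindelof.right_half_plane_of_bounded_on_real (z := -(z * I)) hd'
    ⟨1, one_lt_two, 0, by
      simpa using (Asymptotics.isBigO_one_iff ℝ).2
        (tendsto_mul_I_cobounded.isBoundedUnder_comp (f := (‖f ·‖)) hb)⟩
    (tendsto_ofReal_mul_I_atTop.isBoundedUnder_comp (f := (‖f ·‖)) hb)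
    (fun x => by simpa [mul_assoc, ← ofReal_neg] using hre (-x)) (by simpa using hz)
  simpa [mul_assoc] using hrot

theorem eqOn_one_of_tendsto_one_of_norm_ofReal_eq_one {h : ℂ → ℂ}
    (hd : DiffContOnCl ℂ h {z | 0 < z.im})
    (hlim : Tendsto h (cobounded ℂ ⊓ 𝓟 {z | 0 < z.im}) (𝓝 1))
    (h0 : ∀ z, 0 < z.im → h z ≠ 0) (hre : ∀ x : ℝ, ‖h x‖ = 1) :
    EqOn h 1 {z | 0 ≤ z.im} := by
  have hne : ∀ z ∈ closure {z : ℂ | 0 < z.im}, h z ≠ 0 := by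
    intro z hz
    rw [closure_setOfPred_lt_im] at hz
    rcases (show 0 ≤ z.im from hz).lt_or_eq with hpos | hreal
    · exact h0 z hpos
    · rw [← re_add_im z, ← hreal, ofReal_zero, zero_mul, add_zero, ← norm_pos_iff, hre]
      exact one_pos
  have hle : ∀ z : ℂ, 0 ≤ z.im → ‖h z‖ ≤ 1 := fun z hz =>
    PhragmenLindelof.upper_half_plane_of_bounded hd hlim.norm.isBoundedUnder_le
      (fun x => (hre x).le) hz
  have hinv_le : ∀ z : ℂ, 0 ≤ z.im → ‖(h z)⁻¹‖ ≤ 1 := fun z hz =>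
    PhragmenLindelof.upper_half_plane_of_bounded (hd.inv hne)
      (by simpa using (hlim.inv₀ one_ne_zero).norm.isBoundedUnder_le) (fun x => by simp [hre]) hz
  have hI_ge : 1 ≤ ‖h I‖ := by
    simpa [inv_le_one₀ (norm_pos_iff.2 (h0 I (by simp)))] using hinv_le I (by simp)
  have hmax : IsMaxOn (norm ∘ h) {z | 0 < z.im} I := fun z hz =>
    (hle z (le_of_lt hz)).trans hI_ge
  have hconst := eqOn_closure_of_isPreconnected_of_isMaxOn_norm
    (convex_halfSpace_im_gt 0).isPreconnected (isOpen_lt continuous_const continuous_im) hd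
    (by simp) hmax
  rw [closure_setOfPred_lt_im] at hconst
  have hI : h I = 1 := by
    refine tendsto_nhds_unique ?_ (hlim.comp tendsto_ofReal_mul_I_atTop)
    refine tendsto_const_nhds.congr' ?_
    filter_upwards [eventually_gt_atTop 0] with t ht
    exact (hconst (show 0 ≤ ((t : ℂ) * I).im by simpa using ht.le)).symm
  intro z hz
  rw [hconst hz]
  exact hI

theorem exists_eq_mul_blaschke {a : ℂ → ℂ} {s : Finset ℂ} (hs : ∀ c ∈ s, 0 < c.im)
    (hd : DifferentiableOn ℂ a {z | 0 < z.im}) (hc : ContinuousOn a {z | 0 ≤ z.im})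
    (hzeros : ∀ z, 0 < z.im → (a z = 0 ↔ z ∈ s)) (hsimple : ∀ c ∈ s, deriv a c ≠ 0) :
    ∃ h : ℂ → ℂ, DifferentiableOn ℂ h {z | 0 < z.im} ∧ ContinuousOn h {z | 0 ≤ z.im} ∧
      (∀ z, 0 < z.im → h z ≠ 0) ∧ ∀ z, 0 ≤ z.im → a z = h z * blaschke s z := by
  have hU : IsOpen {z : ℂ | 0 < z.im} := isOpen_lt continuous_const continuous_im
  obtain ⟨g, hgd, hgc, hag⟩ := exists_eq_mul_prod_sub_of_eq_zero hU hd hc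
    fun c hc => ⟨hs c hc, (hzeros c (hs c hc)).2 hc⟩
  have hg0 : ∀ z, 0 < z.im → g z ≠ 0 := by
    intro z hz hgz
    by_cases hzs : z ∈ s
    · refine hsimple z hzs ?_
      rw [show a = fun w => g w * ∏ c ∈ s, (w - c) from funext hag]
      exact deriv_mul_eq_zero_of_eq_zero ((hgd z hz).differentiableAt (hU.mem_nhds hz))
        (by fun_prop) hgz (Finset.prod_eq_zero hzs (sub_self z))
    · exact hzs ((hzeros z hz).1 (by rw [hag, hgz, zero_mul]))
  have hQ0 : ∀ z : ℂ, 0 ≤ z.im → ∏ c ∈ s, (z - conj c) ≠ 0 := by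
    refine fun z hz => Finset.prod_ne_zero_iff.2 fun c hc hzc => ?_
    have := congrArg im (sub_eq_zero.1 hzc)
    simp only [conj_im] at this
    linarith [hs c hc]
  -- `h = a / blaschke s`, with the removable singularities at `s` filled in
  refine ⟨fun z => g z * ∏ c ∈ s, (z - conj c), hgd.mul (by fun_prop), hgc.mul (by fun_prop),
    fun z hz => mul_ne_zero (hg0 z hz) (hQ0 z hz.le), fun z hz => ?_⟩
  rw [hag, blaschke, Finset.prod_div_distrib]
  field_simp [hQ0 z hz]

theorem stmt17 (a : ℂ → ℂ) (N : ℕ) (lam : Fin N → ℂ)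
    (hinj : Function.Injective lam)
    (him : ∀ n, 0 < (lam n).im)
    (hdiff : DifferentiableOn ℂ a {z : ℂ | 0 < z.im})
    (hcont : ContinuousOn a {z : ℂ | 0 ≤ z.im})
    (hlim : Tendsto a (Filter.comap (fun z : ℂ => ‖z‖) Filter.atTop ⊓
      Filter.principal {z : ℂ | 0 ≤ z.im}) (nhds 1))
    (hzeros : ∀ z : ℂ, 0 < z.im → (a z = 0 ↔ ∃ n, z = lam n))
    (hsimple : ∀ n, deriv a (lam n) ≠ 0)
    (hmod : ∀ x : ℝ, ‖a x‖ = 1) :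
    ∀ z : ℂ, 0 ≤ z.im → (∀ n, z ≠ starRingEnd ℂ (lam n)) →
      a z = ∏ n : Fin N, (z - lam n) / (z - starRingEnd ℂ (lam n)) := by
  intro z hz _
  set s := Finset.univ.image lam
  have hs : ∀ c ∈ s, 0 < c.im := by simpa [s] using him
  obtain ⟨h, hhd, hhc, hh0, hah⟩ := exists_eq_mul_blaschke hs hdiff hcont
    (fun z hz => by simpa [s, eq_comm] using hzeros z hz) (by simpa [s] using hsimple)
  have hre : ∀ x : ℝ, ‖h x‖ = 1 := fun x => by
    simpa [norm_blaschke_ofReal fun c hc => (hs c hc).ne', hmod, eq_comm] using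
      congrArg norm (hah x (by simp))
  have hlim' : Tendsto h (cobounded ℂ ⊓ 𝓟 {z | 0 < z.im}) (𝓝 1) := by
    have hl : cobounded ℂ ⊓ 𝓟 {z | 0 < z.im} ≤ cobounded ℂ ⊓ 𝓟 {z | 0 ≤ z.im} :=
      inf_le_inf_left _ (principal_mono.2 (ofPred_subset_ofPred.2 fun _ => le_of_lt))
    have hB : Tendsto (blaschke s) (cobounded ℂ ⊓ 𝓟 {z | 0 < z.im}) (𝓝 1) :=
      (tendsto_blaschke_cobounded s).mono_left inf_le_left
    rw [comap_norm_atTop] at hlim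
    have hquot : Tendsto (a / blaschke s) (cobounded ℂ ⊓ 𝓟 {z | 0 < z.im}) (𝓝 1) := by
      simpa using (hlim.mono_left hl).div hB one_ne_zero
    refine hquot.congr' ?_
    filter_upwards [hB.eventually_ne one_ne_zero, mem_inf_of_right (mem_principal_self _)]
      with w hBw hw
    rw [Pi.div_apply, hah w (le_of_lt hw), mul_div_cancel_right₀ _ hBw]
  have hh1 := eqOn_one_of_tendsto_one_of_norm_ofReal_eq_one
    ⟨hhd, by rwa [closure_setOfPred_lt_im]⟩ hlim' hh0 hre
  rw [hah z hz, hh1 hz, Pi.one_apply, one_mul, blaschke, Finset.prod_image hinj.injOn]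
end
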